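/- Let Δ > 0, let y₁, …, y_N be points in the unit square [0,1]² ⊆ ℝ² (with the Euclidean metric), and let r₁, …, r_N ≥ 0 be real numbers with (Δ/2)·r_i ≤ 1 for every i. If dist(y_i, y_j) ≥ (Δ/2)·(r_i + r_j) for all i ≠ j, then the open balls B(y_i, (Δ/2)r_i) are pairwise disjoint and ∑_{i=1}^{N} r_i² ≤ 36/(π Δ²). -/

import Mathlib

/-!
Each hop of length `rᵢ` owns the open disk of radius `(Δ/2) rᵢ` about its receiver; the separation
hypothesis makes these disks pairwise disjoint. Since `(Δ/2) rᵢ ≤ 1`, every disk lies in the square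
`[-1, 2]²` of area `9`, so the total area `π (Δ/2)² ∑ rᵢ²` is at most `9`.
-/

open MeasureTheory Metric Set

namespace EuclideanSpace

variable {ι : Type*} [Fintype ι]

theorem volume_cube {a b : ℝ} (hab : a ≤ b) :
    volume {z : EuclideanSpace ℝ ι | ∀ j, z j ∈ Icc a b}
      = ENNReal.ofReal ((b - a) ^ Fintype.card ι) := by
  have hcube : {z : EuclideanSpace ℝ ι | ∀ j, z j ∈ Icc a b}
      = (MeasurableEquiv.toLp 2 (ι → ℝ)).symm ⁻¹' univ.pi fun _ => Icc a b := by
    ext z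
    simp [Pi.le_def, forall_and]
  rw [hcube, (volume_preserving_symm_measurableEquiv_toLp ι).measure_preimage
    (MeasurableSet.univ_pi fun _ => measurableSet_Icc).nullMeasurableSet, volume_pi_pi]
  simp [Real.volume_Icc, ENNReal.ofReal_pow (sub_nonneg.mpr hab)]

theorem ball_subset_cube {a b δ ρ : ℝ} {y : EuclideanSpace ℝ ι} (hy : ∀ j, y j ∈ Icc a b)
    (hρ : ρ ≤ δ) :
    ball y ρ ⊆ {z : EuclideanSpace ℝ ι | ∀ j, z j ∈ Icc (a - δ) (b + δ)} := by
  intro z hz j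
  have hzj : |z j - y j| < δ :=
    calc |z j - y j| = dist (z j) (y j) := (Real.dist_eq _ _).symm
      _ ≤ dist z y := PiLp.dist_apply_le z y j
      _ < δ := (mem_ball.mp hz).trans_le hρ
  rw [abs_lt] at hzj
  constructor <;> linarith [(hy j).1, (hy j).2]

end EuclideanSpace

theorem pi_mul_sum_sq_radius_le_volume {ι : Type*} (s : Finset ι)
    {S : Set (EuclideanSpace ℝ (Fin 2))} {c : ι → EuclideanSpace ℝ (Fin 2)} {ρ : ι → ℝ}
    (hρ : ∀ i ∈ s, 0 ≤ ρ i) (hdisj : (s : Set ι).PairwiseDisjoint fun i => ball (c i) (ρ i))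
    (hS : ∀ i ∈ s, ball (c i) (ρ i) ⊆ S) :
    ENNReal.ofReal (Real.pi * ∑ i ∈ s, ρ i ^ 2) ≤ volume S := by
  calc ENNReal.ofReal (Real.pi * ∑ i ∈ s, ρ i ^ 2)
      = ∑ i ∈ s, volume (ball (c i) (ρ i)) := by
        rw [Finset.mul_sum, ENNReal.ofReal_sum_of_nonneg fun i _ => by positivity]
        refine Finset.sum_congr rfl fun i hi => ?_
        rw [EuclideanSpace.volume_ball_fin_two, ← ENNReal.ofReal_pow (hρ i hi),
          ← ENNReal.ofReal_mul (by positivity), mul_comm]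
    _ = volume (⋃ i ∈ s, ball (c i) (ρ i)) :=
        (measure_biUnion_finset hdisj fun _ _ => measurableSet_ball).symm
    _ ≤ volume S := measure_mono (iUnion₂_subset hS)

/-- Disk-packing step underlying the interference upper bound (Appendix A). -/
theorem disk_packing_bound
    (Δ : ℝ) (hΔ : 0 < Δ)
    (N : ℕ) (y : Fin N → EuclideanSpace ℝ (Fin 2)) (r : Fin N → ℝ)
    (hy : ∀ i, ∀ j : Fin 2, y i j ∈ Set.Icc (0 : ℝ) 1)
    (hr : ∀ i, 0 ≤ r i)
    (hr1 : ∀ i, (Δ / 2) * r i ≤ 1)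
    (hsep : ∀ i j, i ≠ j → dist (y i) (y j) ≥ (Δ / 2) * (r i + r j)) :
    (∀ i j, i ≠ j →
      Disjoint (Metric.ball (y i) ((Δ / 2) * r i)) (Metric.ball (y j) ((Δ / 2) * r j))) ∧
    ∑ i, (r i) ^ 2 ≤ 36 / (Real.pi * Δ ^ 2) := by
  have hdisj : ∀ i j, i ≠ j →
      Disjoint (ball (y i) ((Δ / 2) * r i)) (ball (y j) ((Δ / 2) * r j)) := fun i j hij =>
    ball_disjoint_ball (by simpa only [mul_add] using hsep i j hij)
  refine ⟨hdisj, ?_⟩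
  have harea := pi_mul_sum_sq_radius_le_volume Finset.univ
    (fun i _ => mul_nonneg (by positivity) (hr i)) (fun i _ j _ hij => hdisj i j hij)
    (fun i _ => EuclideanSpace.ball_subset_cube (hy i) (hr1 i))
  rw [EuclideanSpace.volume_cube (by norm_num), ENNReal.ofReal_le_ofReal_iff (by positivity),
    ← Finset.sum_congr rfl fun i _ => (mul_pow (Δ / 2) (r i) 2).symm, ← Finset.mul_sum] at harea
  norm_num at harea
  rw [le_div_iff₀ (by positivity)]
  calc (∑ i, r i ^ 2) * (Real.pi * Δ ^ 2) = 4 * (Real.pi * ((Δ / 2) ^ 2 * ∑ i, r i ^ 2)) := by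
        ring
    _ ≤ 36 := by linarith
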